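/- Let d ≥ 3, let f = x_1^k x_2^{d−k} ∈ ℂ[x_1,x_2] with 0 < k ≤ d−1, and let dH_f be the differential of the Hessian map at f, restricted to homogeneous binary forms of degree d. Then dim Ker(dH_f) ≤ 1, unless d = 2k and k is a perfect square; in that exceptional case Ker(dH_f) is the two-dimensional span of x_1^{k+√k}x_2^{k−√k} and x_1^{k−√k}x_2^{k+√k}. -/
import Mathlib


open MvPolynomial

/-- The differential of the Hessian map at a binary form `f`:
`dH_f(g) = g_{11}f_{22} + f_{11}g_{22} - 2f_{12}g_{12}`. -/
noncomputable def dH2 (f : MvPolynomial (Fin 2) ℂ) :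
    MvPolynomial (Fin 2) ℂ →ₗ[ℂ] MvPolynomial (Fin 2) ℂ :=
  (LinearMap.mulLeft ℂ (pderiv 1 (pderiv 1 f))).comp
      ((pderiv (R := ℂ) (0 : Fin 2)).toLinearMap.comp (pderiv 0).toLinearMap)
  + (LinearMap.mulLeft ℂ (pderiv 0 (pderiv 0 f))).comp
      ((pderiv (R := ℂ) (1 : Fin 2)).toLinearMap.comp (pderiv 1).toLinearMap)
  - (LinearMap.mulLeft ℂ (2 * pderiv 0 (pderiv 1 f))).comp
      ((pderiv (R := ℂ) (0 : Fin 2)).toLinearMap.comp (pderiv 1).toLinearMap)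

/-- The kernel of the differential of the Hessian map at `f`, restricted to homogeneous
binary forms of degree `d`. -/
noncomputable def kerDH2 (d : ℕ) (f : MvPolynomial (Fin 2) ℂ) :
    Submodule ℂ (MvPolynomial (Fin 2) ℂ) :=
  homogeneousSubmodule (Fin 2) ℂ d ⊓ LinearMap.ker (dH2 f)

namespace Tst

noncomputable def e (a b : ℕ) : Fin 2 →₀ ℕ := Finsupp.single 0 a + Finsupp.single 1 b

lemma e_apply0 (a b : ℕ) : e a b 0 = a := by simp [e, Finsupp.single_apply]
lemma e_apply1 (a b : ℕ) : e a b 1 = b := by simp [e, Finsupp.single_apply]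

lemma e_sub0 (a b n : ℕ) : e a b - Finsupp.single 0 n = e (a - n) b := by
  ext i; fin_cases i <;> simp [e, Finsupp.tsub_apply, Finsupp.single_apply]

lemma e_sub1 (a b n : ℕ) : e a b - Finsupp.single 1 n = e a (b - n) := by
  ext i; fin_cases i <;> simp [e, Finsupp.tsub_apply, Finsupp.single_apply]

lemma e_add (a b a' b' : ℕ) : e a b + e a' b' = e (a + a') (b + b') := by
  ext i; fin_cases i <;> simp [e, Finsupp.single_apply]

lemma e_inj0 {a b a' b' : ℕ} (h : e a b = e a' b') : a = a' := by
  have := congrArg (fun s : Fin 2 →₀ ℕ => s 0) h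
  simpa [e_apply0] using this

noncomputable def cC (k l a b : ℕ) : ℂ :=
  ((a : ℂ) * ((a - 1 : ℕ) : ℂ)) * ((l : ℂ) * ((l - 1 : ℕ) : ℂ))
  + ((b : ℂ) * ((b - 1 : ℕ) : ℂ)) * ((k : ℂ) * ((k - 1 : ℕ) : ℂ))
  - 2 * (a : ℂ) * (b : ℂ) * ((k : ℂ) * (l : ℂ))

lemma mono_shift {s t : Fin 2 →₀ ℕ} (c : ℂ) (h : c ≠ 0 → s = t) :
    (monomial s c : MvPolynomial (Fin 2) ℂ) = monomial t c := by
  by_cases hc : c = 0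
  · subst hc; simp
  · rw [h hc]

lemma dH2_monomial (k l a b : ℕ) (hk : 1 ≤ k) (hl : 1 ≤ l) (co : ℂ) :
    dH2 (monomial (e k l) 1) (monomial (e a b) co)
      = monomial (e (a + k - 2) (b + l - 2)) (co * cC k l a b) := by
  simp only [dH2, LinearMap.sub_apply, LinearMap.add_apply, LinearMap.coe_comp,
    Function.comp_apply, LinearMap.mulLeft_apply, Derivation.coeFn_coe,
    pderiv_monomial, e_sub0, e_sub1, e_apply0, e_apply1]
  have C2 : ∀ (s : Fin 2 →₀ ℕ) (c : ℂ), (2 : MvPolynomial (Fin 2) ℂ) * monomial s c = monomial s (2 * c) := by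
    intro s c
    rw [show (2 : MvPolynomial (Fin 2) ℂ) = C 2 from (map_ofNat C 2).symm, C_mul_monomial]
  simp only [mul_assoc, monomial_mul, e_add, C2]
  rw [mono_shift (s := e (k + (a - 1 - 1)) (l - 1 - 1 + b)) _ (by
        intro h
        simp only [ne_eq, mul_eq_zero, not_or, Nat.cast_eq_zero] at h
        rw [show k + (a - 1 - 1) = a + k - 2 by omega, show l - 1 - 1 + b = b + l - 2 by omega]),
      mono_shift (s := e (k - 1 - 1 + a) (l + (b - 1 - 1))) _ (by
        intro h
        simp only [ne_eq, mul_eq_zero, not_or, Nat.cast_eq_zero] at h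
        rw [show k - 1 - 1 + a = a + k - 2 by omega, show l + (b - 1 - 1) = b + l - 2 by omega]),
      mono_shift (s := e (k - 1 + (a - 1)) (l - 1 + (b - 1))) _ (by
        intro h
        simp only [ne_eq, mul_eq_zero, not_or, Nat.cast_eq_zero] at h
        rw [show k - 1 + (a - 1) = a + k - 2 by omega, show l - 1 + (b - 1) = b + l - 2 by omega]),
      ← map_add, ← map_sub]
  congr 1
  simp only [cC]
  ring


lemma e_degree (a b : ℕ) : (e a b).degree = a + b := by
  have : (e a b).degree = ∑ i : Fin 2, e a b i := by
    rw [Finsupp.degree]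
    exact Finset.sum_subset (Finset.subset_univ _)
      (fun x _ hx => Finsupp.notMem_support_iff.mp hx)
  rw [this, Fin.sum_univ_two, e_apply0, e_apply1]

lemma cC_ne_zero_imp {k l a b : ℕ} (hk : 1 ≤ k) (hl : 1 ≤ l) (h : cC k l a b ≠ 0) :
    2 ≤ a + k ∧ 2 ≤ b + l := by
  by_contra hc
  apply h
  rw [not_and_or] at hc
  rcases hc with hc | hc
  · have ha : a = 0 ∧ k = 1 := by omega
    simp [cC, ha.1, ha.2]
  · have hb : b = 0 ∧ l = 1 := by omega
    simp [cC, hb.1, hb.2]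

lemma homog_eq_sum {d : ℕ} {g : MvPolynomial (Fin 2) ℂ}
    (hg : g ∈ homogeneousSubmodule (Fin 2) ℂ d) :
    g = ∑ a ∈ Finset.range (d + 1), monomial (e a (d - a)) (coeff (e a (d - a)) g) := by
  have hsub : g.support ⊆ (Finset.range (d + 1)).image (fun a => e a (d - a)) := by
    intro σ hσ
    have hw : (Finsupp.weight 1) σ = d :=
      ((mem_homogeneousSubmodule d g).mp hg) (MvPolynomial.mem_support_iff.mp hσ)
    have hdeg : σ.degree = d := by rw [Finsupp.degree_eq_weight_one]; exact hw
    have h01 : σ 0 + σ 1 = d := by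
      rw [← hdeg]
      have : σ.degree = ∑ i : Fin 2, σ i := by
        rw [Finsupp.degree]
        exact Finset.sum_subset (Finset.subset_univ _)
          (fun x _ hx => Finsupp.notMem_support_iff.mp hx)
      rw [this, Fin.sum_univ_two]
    refine Finset.mem_image.mpr ⟨σ 0, Finset.mem_range.mpr (by omega), ?_⟩
    ext i
    fin_cases i
    · show e (σ 0) (d - σ 0) 0 = σ 0
      rw [e_apply0]
    · show e (σ 0) (d - σ 0) 1 = σ 1
      rw [e_apply1]; omega
  calc g = ∑ v ∈ g.support, monomial v (coeff v g) := (support_sum_monomial_coeff g).symm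
    _ = ∑ v ∈ (Finset.range (d + 1)).image (fun a => e a (d - a)),
          monomial v (coeff v g) := by
        refine (Finset.sum_subset hsub (fun x _ hx => ?_))
        rw [MvPolynomial.notMem_support_iff.mp hx, map_zero]
    _ = ∑ a ∈ Finset.range (d + 1), monomial (e a (d - a)) (coeff (e a (d - a)) g) := by
        refine Finset.sum_image (fun x _ y _ h => ?_)
        exact e_inj0 h

lemma dH2_repr {d k l : ℕ} (hk : 1 ≤ k) (hl : 1 ≤ l) {g : MvPolynomial (Fin 2) ℂ}
    (hg : g ∈ homogeneousSubmodule (Fin 2) ℂ d) :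
    dH2 (monomial (e k l) 1) g
      = ∑ a ∈ Finset.range (d + 1),
          monomial (e (a + k - 2) ((d - a) + l - 2)) (coeff (e a (d - a)) g * cC k l a (d - a)) := by
  conv_lhs => rw [homog_eq_sum hg]
  rw [map_sum]
  exact Finset.sum_congr rfl fun a _ => dH2_monomial k l a (d - a) hk hl _

lemma ker_iff {d k l : ℕ} (hk : 1 ≤ k) (hl : 1 ≤ l) {g : MvPolynomial (Fin 2) ℂ}
    (hg : g ∈ homogeneousSubmodule (Fin 2) ℂ d) :
    dH2 (monomial (e k l) 1) g = 0 ↔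
      ∀ a, a ≤ d → coeff (e a (d - a)) g * cC k l a (d - a) = 0 := by
  rw [dH2_repr hk hl hg]
  constructor
  · intro h a ha
    by_cases hc : cC k l a (d - a) = 0
    · rw [hc, mul_zero]
    obtain ⟨hak, _⟩ := cC_ne_zero_imp hk hl hc
    have h2 := congrArg (coeff (e (a + k - 2) ((d - a) + l - 2))) h
    rw [coeff_zero, MvPolynomial.coeff_sum] at h2
    simp only [coeff_monomial] at h2
    rw [Finset.sum_eq_single a (fun a' _ hne => ?_) (fun hna => absurd (Finset.mem_range.mpr (by omega)) hna)] at h2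
    · rw [if_pos rfl] at h2
      exact h2
    · by_cases hc' : cC k l a' (d - a') = 0
      · rw [hc', mul_zero, ite_self]
      · obtain ⟨hak', _⟩ := cC_ne_zero_imp hk hl hc'
        rw [if_neg]
        intro heq
        exact hne (by have := e_inj0 heq; omega)
  · intro h
    apply Finset.sum_eq_zero
    intro a ha
    rw [h a (by have := Finset.mem_range.mp ha; omega), map_zero]

def q (n : ℕ) : ℤ := (n : ℤ) * ((n : ℤ) - 1)

lemma cast_q (n : ℕ) : ((n : ℂ) * ((n - 1 : ℕ) : ℂ)) = ((q n : ℤ) : ℂ) := by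
  cases n with
  | zero => simp [q]
  | succ p => simp only [q, Nat.succ_sub_one]; push_cast; ring

lemma cC_eq_int (k l a b : ℕ) :
    cC k l a b = (((q a * q l + q b * q k - 2 * a * b * (k * l) : ℤ)) : ℂ) := by
  rw [cC, cast_q, cast_q, cast_q, cast_q]
  push_cast
  ring

lemma cC_zero_iff (k l a b : ℕ) :
    cC k l a b = 0 ↔ q a * q l + q b * q k - 2 * a * b * (k * l) = 0 := by
  rw [cC_eq_int]
  exact_mod_cast Iff.rfl

lemma root_int {k l a : ℕ} (ha : a ≤ k + l) :
    cC k l a (k + l - a) = 0 ↔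
      (a : ℤ) * ((a : ℤ) - 1) * ((l : ℤ) * ((l : ℤ) - 1))
        + ((k : ℤ) + l - a) * ((k : ℤ) + l - a - 1) * ((k : ℤ) * ((k : ℤ) - 1))
        - 2 * a * ((k : ℤ) + l - a) * ((k : ℤ) * (l : ℤ)) = 0 := by
  rw [cC_zero_iff]
  have hb : ((k + l - a : ℕ) : ℤ) = (k : ℤ) + l - a := by omega
  constructor <;> intro h
  · simp only [q] at h
    rw [hb] at h
    linear_combination h
  · simp only [q]
    rw [hb]
    linear_combination h

lemma NT_A {k l : ℕ} (hk : 1 ≤ k) (hl : 1 ≤ l) (hd : 3 ≤ k + l) {x y : ℤ} (hxy : x ≠ y)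
    (h1 : x * (x - 1) * ((l : ℤ) * ((l : ℤ) - 1))
        + ((k : ℤ) + l - x) * ((k : ℤ) + l - x - 1) * ((k : ℤ) * ((k : ℤ) - 1))
        - 2 * x * ((k : ℤ) + l - x) * ((k : ℤ) * (l : ℤ)) = 0)
    (h2 : y * (y - 1) * ((l : ℤ) * ((l : ℤ) - 1))
        + ((k : ℤ) + l - y) * ((k : ℤ) + l - y - 1) * ((k : ℤ) * ((k : ℤ) - 1))
        - 2 * y * ((k : ℤ) + l - y) * ((k : ℤ) * (l : ℤ)) = 0) :
    l = k ∧ IsSquare k := by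
  have hk' : (1 : ℤ) ≤ (k : ℤ) := by exact_mod_cast hk
  have hl' : (1 : ℤ) ≤ (l : ℤ) := by exact_mod_cast hl
  have hd' : (3 : ℤ) ≤ (k : ℤ) + l := by exact_mod_cast hd
  have hfac : (x - y) * (((k:ℤ) + l) * (((k:ℤ) + l) - 1) * (x + y)
      - ((l:ℤ) * ((l:ℤ) - 1) + (k:ℤ) * ((k:ℤ) - 1) * (2 * ((k:ℤ) + l) - 1)
        + 2 * (k:ℤ) * l * ((k:ℤ) + l))) = 0 := by
    linear_combination h1 - h2
  have hsum : ((k:ℤ) + l) * (((k:ℤ) + l) - 1) * (x + y)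
      - ((l:ℤ) * ((l:ℤ) - 1) + (k:ℤ) * ((k:ℤ) - 1) * (2 * ((k:ℤ) + l) - 1)
        + 2 * (k:ℤ) * l * ((k:ℤ) + l)) = 0 := by
    rcases mul_eq_zero.mp hfac with h | h
    · exact absurd (sub_eq_zero.mp h) hxy
    · exact h
  have hA : ((k:ℤ) + l) * (((k:ℤ) + l) - 1) ≠ 0 := by nlinarith
  have hprod0 : ((k:ℤ) + l) * (((k:ℤ) + l) - 1) * (x * y)
      = ((k:ℤ) + l) * (((k:ℤ) + l) - 1) * ((k:ℤ) * ((k:ℤ) - 1)) := by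
    linear_combination x * hsum - h1
  have hprod : x * y = (k:ℤ) * ((k:ℤ) - 1) := mul_left_cancel₀ hA hprod0
  have hsum2 : (((k:ℤ) + l) - 1) * (((k:ℤ) + l) * (x + y)
      - (((k:ℤ) + l) ^ 2 + ((k:ℤ) - l) * (((k:ℤ) + l) - 1))) = 0 := by
    linear_combination hsum
  have hsum3 : ((k:ℤ) + l) * (x + y) = ((k:ℤ) + l) ^ 2 + ((k:ℤ) - l) * (((k:ℤ) + l) - 1) := by
    rcases mul_eq_zero.mp hsum2 with h | h
    · exfalso; nlinarith
    · linarith [sub_eq_zero.mp h]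
  have hdvd : ((k:ℤ) + l) ∣ ((k:ℤ) - l) :=
    ⟨(k:ℤ) - l - (x + y) + ((k:ℤ) + l), by linear_combination hsum3⟩
  have hKL : (k:ℤ) - l = 0 := Int.eq_zero_of_abs_lt_dvd hdvd (abs_lt.mpr ⟨by linarith, by linarith⟩)
  have hlk : l = k := by omega
  have hs4 : x + y = 2 * (k:ℤ) := by
    have h2K : (2 * (k:ℤ)) * (x + y) = (2 * (k:ℤ)) * (2 * (k:ℤ)) := by
      linear_combination hsum3 + (x + y - 2 * (k:ℤ) - 1) * hKL
    have := mul_left_cancel₀ (a := 2 * (k:ℤ)) (by nlinarith) h2K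
    linarith
  have hsq : (x - (k:ℤ)) ^ 2 = (k:ℤ) := by linear_combination x * hs4 - hprod
  refine ⟨hlk, ⟨(x - (k:ℤ)).natAbs, ?_⟩⟩
  have h5 : ((x - (k:ℤ)).natAbs : ℤ) * ((x - (k:ℤ)).natAbs : ℤ) = (k:ℤ) := by
    rw [Int.natAbs_mul_self']
    linear_combination hsq
  exact_mod_cast h5.symm

lemma NT_B {k m : ℕ} (hm : 1 ≤ m) (hk : k = m ^ 2) {x : ℤ} :
    x * (x - 1) * ((k : ℤ) * ((k : ℤ) - 1))
      + ((k : ℤ) + k - x) * ((k : ℤ) + k - x - 1) * ((k : ℤ) * ((k : ℤ) - 1))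
      - 2 * x * ((k : ℤ) + k - x) * ((k : ℤ) * (k : ℤ)) = 0
    ↔ (x = (k : ℤ) + m ∨ x = (k : ℤ) - m) := by
  subst hk
  have hm' : (1 : ℤ) ≤ (m : ℤ) := by exact_mod_cast hm
  have hm2 : (1 : ℤ) ≤ (m : ℤ) ^ 2 := by nlinarith
  have hlead : (2 * (m : ℤ) ^ 2 * (2 * (m : ℤ) ^ 2 - 1)) ≠ 0 := by nlinarith
  constructor
  · intro h
    have h2 : (2 * (m : ℤ) ^ 2 * (2 * (m : ℤ) ^ 2 - 1))
        * ((x - ((m : ℤ) ^ 2 + m)) * (x - ((m : ℤ) ^ 2 - m))) = 0 := by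
      push_cast at h ⊢
      linear_combination h
    rcases mul_eq_zero.mp h2 with h3 | h3
    · exact absurd h3 hlead
    rcases mul_eq_zero.mp h3 with h4 | h4
    · left; push_cast; linarith [sub_eq_zero.mp h4]
    · right; push_cast; linarith [sub_eq_zero.mp h4]
  · rintro (rfl | rfl) <;> (push_cast; ring)

end Tst

open Tst in
/-- For `f = x_1^k x_2^{d-k}` with `0 < k ≤ d-1`, `d ≥ 3`: `dim Ker(dH_f) ≤ 1`, unless
`d = 2k` and `k` is a perfect square; in that exceptional case `Ker(dH_f)` is the
two-dimensional span of `x_1^{k+√k}x_2^{k-√k}` and `x_1^{k-√k}x_2^{k+√k}`. -/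
theorem ker_dH_monomial_bound (d k : ℕ) (hd : 3 ≤ d) (hk0 : 0 < k) (hkd : k ≤ d - 1) :
    (¬ (d = 2 * k ∧ IsSquare k) →
      Module.finrank ℂ ↥(kerDH2 d (X 0 ^ k * X 1 ^ (d - k))) ≤ 1) ∧
    (∀ m : ℕ, d = 2 * k → k = m ^ 2 →
      kerDH2 d (X 0 ^ k * X 1 ^ (d - k)) =
        Submodule.span ℂ {X 0 ^ (k + m) * X 1 ^ (k - m), X 0 ^ (k - m) * X 1 ^ (k + m)} ∧
      Module.finrank ℂ ↥(kerDH2 d (X 0 ^ k * X 1 ^ (d - k))) = 2) := by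
  have hk : 1 ≤ k := hk0
  obtain ⟨l, rfl⟩ : ∃ l, d = k + l := ⟨d - k, by omega⟩
  have hl : 1 ≤ l := by omega
  have hd3 : 3 ≤ k + l := hd
  have hf : (X 0 ^ k * X 1 ^ (k + l - k) : MvPolynomial (Fin 2) ℂ) = monomial (e k l) 1 := by
    rw [show k + l - k = l by omega, X_pow_eq_monomial, X_pow_eq_monomial, monomial_mul, one_mul]
    rfl
  rw [hf]
  have hmem : ∀ g : MvPolynomial (Fin 2) ℂ,
      g ∈ kerDH2 (k + l) (monomial (e k l) 1) ↔
        g ∈ homogeneousSubmodule (Fin 2) ℂ (k + l) ∧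
          ∀ a, a ≤ k + l → coeff (e a (k + l - a)) g * cC k l a (k + l - a) = 0 := by
    intro g
    rw [kerDH2, Submodule.mem_inf, LinearMap.mem_ker]
    exact ⟨fun ⟨h1, h2⟩ => ⟨h1, (ker_iff hk hl h1).mp h2⟩,
           fun ⟨h1, h2⟩ => ⟨h1, (ker_iff hk hl h1).mpr h2⟩⟩
  have hmono_mem : ∀ a, a ≤ k + l → cC k l a (k + l - a) = 0 →
      monomial (e a (k + l - a)) (1 : ℂ) ∈ kerDH2 (k + l) (monomial (e k l) 1) := by
    intro a ha hc
    refine Submodule.mem_inf.mpr ⟨?_, LinearMap.mem_ker.mpr ?_⟩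
    · exact (mem_homogeneousSubmodule _ _).mpr (isHomogeneous_monomial 1 (by rw [e_degree]; omega))
    · rw [dH2_monomial k l a (k + l - a) hk hl 1, hc, mul_zero, map_zero]
  constructor
  · -- Part 1
    intro hne
    have huniq : ∀ a₁ a₂, a₁ ≤ k + l → a₂ ≤ k + l →
        cC k l a₁ (k + l - a₁) = 0 → cC k l a₂ (k + l - a₂) = 0 → a₁ = a₂ := by
      intro a₁ a₂ ha1 ha2 hc1 hc2
      by_contra hne'
      have hx : ((a₁ : ℤ)) ≠ (a₂ : ℤ) := by omega
      obtain ⟨hlk, hsq⟩ := NT_A hk hl hd3 hx ((root_int ha1).mp hc1) ((root_int ha2).mp hc2)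
      exact hne ⟨by omega, hsq⟩
    by_cases hex : ∃ a, a ≤ k + l ∧ cC k l a (k + l - a) = 0
    · obtain ⟨a₀, ha₀, hc₀⟩ := hex
      have hle : kerDH2 (k + l) (monomial (e k l) 1) ≤
          Submodule.span ℂ {monomial (e a₀ (k + l - a₀)) (1 : ℂ)} := by
        intro g hg
        obtain ⟨hgh, hgk⟩ := (hmem g).mp hg
        rw [homog_eq_sum hgh]
        refine Submodule.sum_mem _ fun a ha => ?_
        have ha' : a ≤ k + l := by have := Finset.mem_range.mp ha; omega
        rcases mul_eq_zero.mp (hgk a ha') with hz | hz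
        · rw [hz, map_zero]; exact Submodule.zero_mem _
        · have heq : a = a₀ := huniq a a₀ ha' ha₀ hz hc₀
          subst heq
          rw [show (monomial (e a (k + l - a)) (coeff (e a (k + l - a)) g)) =
              coeff (e a (k + l - a)) g • monomial (e a (k + l - a)) (1 : ℂ) from by
            rw [smul_monomial, smul_eq_mul, mul_one]]
          exact Submodule.smul_mem _ _ (Submodule.subset_span rfl)
      haveI := FiniteDimensional.span_of_finite ℂ
        (Set.finite_singleton (monomial (e a₀ (k + l - a₀)) (1 : ℂ)))
      refine le_trans (Submodule.finrank_mono hle) ?_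
      refine le_trans (finrank_span_le_card _) ?_
      simp
    · have hbot : kerDH2 (k + l) (monomial (e k l) 1) = ⊥ := by
        rw [eq_bot_iff]
        intro g hg
        obtain ⟨hgh, hgk⟩ := (hmem g).mp hg
        rw [Submodule.mem_bot]
        rw [homog_eq_sum hgh]
        refine Finset.sum_eq_zero fun a ha => ?_
        have ha' : a ≤ k + l := by have := Finset.mem_range.mp ha; omega
        rcases mul_eq_zero.mp (hgk a ha') with hz | hz
        · rw [hz, map_zero]
        · exact absurd ⟨a, ha', hz⟩ hex
      rw [hbot, finrank_bot]
      omega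
  · -- Part 2
    intro m hd2k hkm
    have hlk : k = l := by omega
    subst hlk
    have hm1 : 1 ≤ m := by
      rcases Nat.eq_zero_or_pos m with h | h
      · subst h; simp at hkm; omega
      · exact h
    have hmk : m ≤ k := by nlinarith
    have hchar : ∀ a, a ≤ k + k → (cC k k a (k + k - a) = 0 ↔ (a = k + m ∨ a = k - m)) := by
      intro a ha
      rw [root_int ha, NT_B hm1 hkm]
      constructor
      · rintro (h | h)
        · left; omega
        · right; omega
      · rintro (rfl | rfl)
        · left; omega
        · right; omega
    have hxp : (X 0 ^ (k + m) * X 1 ^ (k - m) : MvPolynomial (Fin 2) ℂ)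
        = monomial (e (k + m) (k - m)) 1 := by
      rw [X_pow_eq_monomial, X_pow_eq_monomial, monomial_mul, one_mul]; rfl
    have hxq : (X 0 ^ (k - m) * X 1 ^ (k + m) : MvPolynomial (Fin 2) ℂ)
        = monomial (e (k - m) (k + m)) 1 := by
      rw [X_pow_eq_monomial, X_pow_eq_monomial, monomial_mul, one_mul]; rfl
    rw [hxp, hxq]
    have hkm1 : k + k - (k + m) = k - m := by omega
    have hkm2 : k + k - (k - m) = k + m := by omega
    have hne1 : e (k - m) (k + m) ≠ e (k + m) (k - m) := by
      intro h
      have := e_inj0 h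
      omega
    have hne2 : e (k + m) (k - m) ≠ e (k - m) (k + m) := fun h => hne1 h.symm
    have hspan : kerDH2 (k + k) (monomial (e k k) 1) =
        Submodule.span ℂ {monomial (e (k + m) (k - m)) (1 : ℂ),
          monomial (e (k - m) (k + m)) (1 : ℂ)} := by
      apply le_antisymm
      · intro g hg
        obtain ⟨hgh, hgk⟩ := (hmem g).mp hg
        rw [homog_eq_sum hgh]
        refine Submodule.sum_mem _ fun a ha => ?_
        have ha' : a ≤ k + k := by have := Finset.mem_range.mp ha; omega
        rcases mul_eq_zero.mp (hgk a ha') with hz | hz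
        · rw [hz, map_zero]; exact Submodule.zero_mem _
        · rcases (hchar a ha').mp hz with rfl | rfl
          · rw [hkm1]
            rw [show (monomial (e (k + m) (k - m)) (coeff (e (k + m) (k - m)) g)) =
                coeff (e (k + m) (k - m)) g • monomial (e (k + m) (k - m)) (1 : ℂ) from by
              rw [smul_monomial, smul_eq_mul, mul_one]]
            exact Submodule.smul_mem _ _ (Submodule.subset_span (Set.mem_insert _ _))
          · rw [hkm2]
            rw [show (monomial (e (k - m) (k + m)) (coeff (e (k - m) (k + m)) g)) =
                coeff (e (k - m) (k + m)) g • monomial (e (k - m) (k + m)) (1 : ℂ) from by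
              rw [smul_monomial, smul_eq_mul, mul_one]]
            refine Submodule.smul_mem _ _ (Submodule.subset_span ?_)
            exact Set.mem_insert_iff.mpr (Or.inr rfl)
      · rw [Submodule.span_le]
        rintro v hv
        simp only [Set.mem_insert_iff, Set.mem_singleton_iff] at hv
        rcases hv with rfl | rfl
        · have := hmono_mem (k + m) (by omega) ((hchar (k + m) (by omega)).mpr (Or.inl rfl))
          rwa [hkm1] at this
        · have := hmono_mem (k - m) (by omega) ((hchar (k - m) (by omega)).mpr (Or.inr rfl))
          rwa [hkm2] at this
    refine ⟨hspan, ?_⟩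
    have hli : LinearIndependent ℂ ![monomial (e (k + m) (k - m)) (1 : ℂ),
        monomial (e (k - m) (k + m)) (1 : ℂ)] := by
      rw [LinearIndependent.pair_iff]
      intro s t hst
      constructor
      · have h1 := congrArg (coeff (e (k + m) (k - m))) hst
        rw [coeff_add, coeff_smul, coeff_smul, coeff_monomial, coeff_monomial,
          if_pos rfl, if_neg hne1, coeff_zero] at h1
        simpa using h1
      · have h1 := congrArg (coeff (e (k - m) (k + m))) hst
        rw [coeff_add, coeff_smul, coeff_smul, coeff_monomial, coeff_monomial,
          if_pos rfl, if_neg hne2, coeff_zero] at h1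
        simpa using h1
    have hrange : Set.range ![monomial (e (k + m) (k - m)) (1 : ℂ),
        monomial (e (k - m) (k + m)) (1 : ℂ)] =
        {monomial (e (k + m) (k - m)) (1 : ℂ), monomial (e (k - m) (k + m)) (1 : ℂ)} := by
      ext x
      simp only [Set.mem_range, Fin.exists_fin_two, Matrix.cons_val_zero, Matrix.cons_val_one,
        Matrix.head_cons, Set.mem_insert_iff, Set.mem_singleton_iff, eq_comm]
    rw [hspan, ← hrange, finrank_span_eq_card hli, Fintype.card_fin]
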